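/- For an odd prime p, an even positive integer m, 0 ≤ i ≤ m/2 and epsilon ∈ {±1}, the quantity C_{m,i,epsilon} = (p^{m/2} - epsilon)(p^{m/2 - i} + epsilon) prod_{j=1}^{i-1} (p^{m-2j} - 1) / prod_{j=1}^{i} (p^j - 1) is a nonnegative integer (it counts a set of GL-cosets of matrices G in pi_{m,i} with B[G^{-1}] half-integral). -/
import Mathlib



private def qb (q : ℕ) : ℕ → ℕ → ℕ
  | _, 0 => 1
  | 0, _+1 => 0
  | n+1, k+1 => qb q n k + q^(k+1) * qb q n (k+1)

private lemma qb_eq_zero (q : ℕ) : ∀ n k : ℕ, n < k → qb q n k = 0 := by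
  intro n
  induction n with
  | zero => intro k hk; cases k with
    | zero => omega
    | succ k => rfl
  | succ n ih => intro k hk; cases k with
    | zero => omega
    | succ k => simp [qb, ih k (by omega), ih (k+1) (by omega)]

private lemma qb_self (q : ℕ) : ∀ n : ℕ, qb q n n = 1 := by
  intro n
  induction n with
  | zero => rfl
  | succ n ih => simp [qb, ih, qb_eq_zero q n (n+1) (by omega)]

private lemma qb_mul_prod (q : ℕ) : ∀ n : ℕ, ∀ k ≤ n,
    (qb q n k : ℚ) * ∏ j ∈ Finset.Icc 1 k, ((q:ℚ)^j - 1)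
      = ∏ j ∈ Finset.Icc (n - k + 1) n, ((q:ℚ)^j - 1) := by
  intro n
  induction n with
  | zero =>
    intro k hk
    interval_cases k
    simp [qb]
  | succ n ih =>
    intro k hk
    cases k with
    | zero =>
      have : Finset.Icc (n + 1 - 0 + 1) (n+1) = ∅ := by
        apply Finset.Icc_eq_empty; omega
      simp [qb, this]
    | succ k =>
      have hk' : k ≤ n := by omega
      have key : (qb q (n+1) (k+1) : ℚ)
          = (qb q n k : ℚ) + (q:ℚ)^(k+1) * (qb q n (k+1) : ℚ) := by
        show ((qb q n k + q^(k+1) * qb q n (k+1) : ℕ) : ℚ) = _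
        push_cast; ring
      have e1 := ih k hk'
      -- split top of Icc 1 (k+1)
      have hsplit1 : ∏ j ∈ Finset.Icc 1 (k+1), ((q:ℚ)^j - 1)
          = (∏ j ∈ Finset.Icc 1 k, ((q:ℚ)^j - 1)) * ((q:ℚ)^(k+1) - 1) :=
        Finset.prod_Icc_succ_top (by omega) _
      -- split top of RHS
      have hsplit2 : ∏ j ∈ Finset.Icc (n + 1 - (k+1) + 1) (n+1), ((q:ℚ)^j - 1)
          = (∏ j ∈ Finset.Icc (n - k + 1) n, ((q:ℚ)^j - 1)) * ((q:ℚ)^(n+1) - 1) := by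
        rw [show n + 1 - (k+1) + 1 = n - k + 1 by omega]
        exact Finset.prod_Icc_succ_top (by omega) _
      rw [key, hsplit1, hsplit2]
      rcases Nat.lt_or_ge k n with hkn | hkn
      · have e2 := ih (k+1) (by omega)
        rw [hsplit1] at e2
        -- split bottom of Icc (n-(k+1)+1) n
        have hb : ∏ j ∈ Finset.Icc (n - (k+1) + 1) n, ((q:ℚ)^j - 1)
            = ((q:ℚ)^(n-k) - 1) * ∏ j ∈ Finset.Icc (n - k + 1) n, ((q:ℚ)^j - 1) := by
          rw [show n - (k+1) + 1 = n - k by omega, ← Finset.Ico_add_one_right_eq_Icc,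
            ← Finset.Ico_add_one_right_eq_Icc, Finset.prod_eq_prod_Ico_succ_bot (by omega)]
        rw [hb] at e2
        have hpow : (q:ℚ)^(k+1) * (q:ℚ)^(n-k) = (q:ℚ)^(n+1) := by
          rw [← pow_add]; congr 1; omega
        linear_combination ((q:ℚ)^(k+1) - 1) * e1 + (q:ℚ)^(k+1) * e2
          + (∏ j ∈ Finset.Icc (n - k + 1) n, ((q:ℚ)^j - 1)) * (hpow)
      · have hke : k = n := by omega
        subst hke
        rw [qb_eq_zero q k (k+1) (by omega), qb_self,
          show Finset.Icc (k - k + 1) k = Finset.Icc 1 k by rw [Nat.sub_self]]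
        push_cast
        ring


/-- for an odd prime `p`, an even positive integer `m`, `0 ≤ i ≤ m/2` and
`ε ∈ {±1}`, the quantity
`C_{m,i,ε} = (p^{m/2}-ε)(p^{m/2-i}+ε) ∏_{j=1}^{i-1}(p^{m-2j}-1) / ∏_{j=1}^{i}(p^j-1)`
is a nonnegative integer (it counts a set of `GL`-cosets). -/
theorem C_m_i_eps_is_nonneg_integer (p : ℕ) (hp : p.Prime) (hodd : p ≠ 2)
    (m i : ℕ) (hm : Even m) (hmpos : 0 < m) (hi : i ≤ m / 2) (eps : ℤ)
    (heps : eps = 1 ∨ eps = -1) :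
    ∃ N : ℕ,
      ((p : ℚ) ^ (m / 2) - (eps : ℚ)) * ((p : ℚ) ^ (m / 2 - i) + (eps : ℚ)) *
          (∏ j ∈ Finset.Icc 1 (i - 1), ((p : ℚ) ^ (m - 2 * j) - 1)) /
        (∏ j ∈ Finset.Icc 1 i, ((p : ℚ) ^ j - 1)) = (N : ℚ) := by
  have hp2 : 2 ≤ p := hp.two_le
  have hp1 : (1:ℚ) < (p:ℚ) := by exact_mod_cast hp.one_lt
  obtain ⟨h, hm2⟩ : ∃ h, m = 2 * h := ⟨m/2, by have := Nat.even_iff.mp hm; omega⟩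
  have hh : m / 2 = h := by omega
  have hih : i ≤ h := by omega
  rw [hh]
  -- nonzero denominator
  have hD : (∏ j ∈ Finset.Icc 1 i, ((p : ℚ) ^ j - 1)) ≠ 0 := by
    apply Finset.prod_ne_zero_iff.mpr
    intro j hj
    simp only [Finset.mem_Icc] at hj
    have : (1:ℚ) < (p:ℚ)^j := one_lt_pow₀ hp1 (by omega)
    intro hc
    nlinarith
  rcases Nat.eq_zero_or_pos i with rfl | hipos
  · -- i = 0 : value is p^m - 1
    refine ⟨p^m - 1, ?_⟩
    have hpm : 1 ≤ p ^ m := Nat.one_le_pow _ _ (by omega)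
    have hcast : ((p^m - 1 : ℕ) : ℚ) = (p:ℚ)^m - 1 := by
      push_cast [hpm]; ring
    simp only [Nat.sub_zero, Finset.Icc_eq_empty (by omega : ¬ (1:ℕ) ≤ 0),
      Finset.prod_empty, mul_one, div_one, hcast]
    have hpow : (p:ℚ)^h * (p:ℚ)^h = (p:ℚ)^m := by
      rw [← pow_add]; congr 1; omega
    rcases heps with rfl | rfl <;> push_cast <;> linear_combination hpow
  -- i ≥ 1
  have hhpos : 1 ≤ h := by omega
  -- the middle product, reindexed
  have hmid : ∏ j ∈ Finset.Icc 1 (i-1), ((p : ℚ) ^ (m - 2 * j) - 1)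
      = ∏ j ∈ Finset.Icc (h-i+1) (h-1), (((p:ℚ)^j - 1) * ((p:ℚ)^j + 1)) := by
    apply Finset.prod_nbij' (i := fun j => h - j) (j := fun j => h - j)
    · intro a ha; simp only [Finset.mem_Icc] at *; omega
    · intro a ha; simp only [Finset.mem_Icc] at *; omega
    · intro a ha; simp only [Finset.mem_Icc] at ha; omega
    · intro a ha; simp only [Finset.mem_Icc] at ha; omega
    · intro a ha
      simp only [Finset.mem_Icc] at ha
      rw [show m - 2 * a = (h - a) + (h - a) by omega, pow_add]
      ring
  rcases heps with rfl | rfl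
  · -- ε = 1
    refine ⟨qb p h i * ∏ j ∈ Finset.Icc (h-i) (h-1), (p^j + 1), ?_⟩
    rw [div_eq_iff hD, hmid]
    have key := qb_mul_prod p h i hih
    have hsplitf : ∏ j ∈ Finset.Icc (h - i + 1) h, ((p:ℚ)^j - 1)
        = (∏ j ∈ Finset.Icc (h-i+1) (h-1), ((p:ℚ)^j - 1)) * ((p:ℚ)^h - 1) := by
      rw [show h = (h-1)+1 by omega]
      rw [Finset.prod_Icc_succ_top (by omega)]
      rw [show (h-1)+1 = h by omega]
    have hsplitg : ∏ j ∈ Finset.Icc (h - i) (h-1), ((p:ℚ)^j + 1)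
        = ((p:ℚ)^(h-i) + 1) * ∏ j ∈ Finset.Icc (h-i+1) (h-1), ((p:ℚ)^j + 1) := by
      rw [← Finset.Ico_add_one_right_eq_Icc, ← Finset.Ico_add_one_right_eq_Icc,
        Finset.prod_eq_prod_Ico_succ_bot (by omega)]
    have hcast : ((qb p h i * ∏ j ∈ Finset.Icc (h-i) (h-1), (p^j + 1) : ℕ) : ℚ)
        = (qb p h i : ℚ) * ∏ j ∈ Finset.Icc (h-i) (h-1), ((p:ℚ)^j + 1) := by
      push_cast; ring
    rw [hcast, Finset.prod_mul_distrib, hsplitg,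
      show (1:ℤ) = ((1:ℤ)) from rfl]
    push_cast
    rw [hsplitf] at key
    linear_combination (-((p:ℚ)^(h-i) + 1) * (∏ j ∈ Finset.Icc (h-i+1) (h-1), ((p:ℚ)^j + 1))) * key
  · -- ε = -1
    rcases Nat.lt_or_ge i h with hil | hie
    · refine ⟨qb p (h-1) i * ∏ j ∈ Finset.Icc (h-i+1) h, (p^j + 1), ?_⟩
      rw [div_eq_iff hD, hmid]
      have key := qb_mul_prod p (h-1) i (by omega)
      rw [show h - 1 - i + 1 = h - i by omega] at key
      have hsplitf : ∏ j ∈ Finset.Icc (h - i) (h-1), ((p:ℚ)^j - 1)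
          = ((p:ℚ)^(h-i) - 1) * ∏ j ∈ Finset.Icc (h-i+1) (h-1), ((p:ℚ)^j - 1) := by
        rw [← Finset.Ico_add_one_right_eq_Icc, ← Finset.Ico_add_one_right_eq_Icc,
          Finset.prod_eq_prod_Ico_succ_bot (by omega)]
      have hsplitg : ∏ j ∈ Finset.Icc (h - i + 1) h, ((p:ℚ)^j + 1)
          = (∏ j ∈ Finset.Icc (h-i+1) (h-1), ((p:ℚ)^j + 1)) * ((p:ℚ)^h + 1) := by
        rw [show h = (h-1)+1 by omega]
        rw [Finset.prod_Icc_succ_top (by omega)]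
        rw [show (h-1)+1 = h by omega]
      have hcast : ((qb p (h-1) i * ∏ j ∈ Finset.Icc (h-i+1) h, (p^j + 1) : ℕ) : ℚ)
          = (qb p (h-1) i : ℚ) * ∏ j ∈ Finset.Icc (h-i+1) h, ((p:ℚ)^j + 1) := by
        push_cast; ring
      rw [hcast, Finset.prod_mul_distrib, hsplitg]
      push_cast
      rw [hsplitf] at key
      linear_combination (-(∏ j ∈ Finset.Icc (h-i+1) (h-1), ((p:ℚ)^j + 1)) * ((p:ℚ)^h + 1)) * key
    · -- i = h : the factor p^(h-i) + (-1) = 0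
      refine ⟨0, ?_⟩
      have hie' : i = h := by omega
      rw [div_eq_iff hD, hie', Nat.sub_self]
      push_cast
      ring
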